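/- arXiv:2512.11963 — 8 statements merged into one kernel-verified Lean document; each statement's English description precedes it below -/
import Mathlib

section
/- Let M ≥ 2 and let R : Fin M → Matrix (Fin n) (Fin n) ℝ. Suppose that for every Ω ∈ Matrix.orthogonalGroup (Fin M) ℝ with det Ω = 1 there exists Q ∈ Matrix.orthogonalGroup (Fin n) ℝ such that Qᵀ * (R m) * Q = ∑ k, (Ω m k) • R k for every m. Then for any two unit vectors φ φ' : Fin M → ℝ (i.e. ∑ m, (φ m)² = 1 and ∑ m, (φ' m)² = 1), the matrices ∑ m, (φ m) • R m and ∑ m, (φ' m) • R m have the same characteristic polynomial. -/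
/-!
`SO(M)` acts transitively on each sphere of `ℝ^M` once `M ≥ 2`: the Householder reflection in
`φ - φ'` sends `φ` to `φ'`, and composing it with a reflection in a nonzero vector orthogonal
to `φ'` (which fixes `φ'`) gives a rotation `Ω`. The compensating orthogonal `Q` then conjugates
`∑ φ m • R m` into `∑ φ' m • R m`, and conjugation by an orthogonal matrix preserves the
characteristic polynomial.
-/

open Matrix

namespace Matrix

section Householder

variable {ι K : Type*} [Fintype ι] [DecidableEq ι] [Field K]

noncomputable def householder (v : ι → K) : Matrix ι ι K :=
  1 - (2 / (v ⬝ᵥ v)) • vecMulVec v v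

lemma transpose_householder (v : ι → K) : (householder v)ᵀ = householder v := by
  simp [householder]

lemma vecMul_householder (x v : ι → K) :
    x ᵥ* householder v = x - (2 / (v ⬝ᵥ v) * (x ⬝ᵥ v)) • v := by
  rw [householder, vecMul_sub, vecMul_one, vecMul_smul, vecMul_vecMulVec, smul_smul]

variable {v : ι → K}

lemma householder_mul_self (hv : v ⬝ᵥ v ≠ 0) : householder v * householder v = 1 := by
  have hP : vecMulVec v v * vecMulVec v v = (v ⬝ᵥ v) • vecMulVec v v := by
    rw [vecMulVec_mul_vecMulVec, vecMulVec_smul]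
  simp only [householder, sub_mul, mul_sub, one_mul, mul_one, Matrix.smul_mul, Matrix.mul_smul,
    hP, smul_smul]
  rw [div_mul_cancel₀ _ hv]
  module

lemma det_householder (hv : v ⬝ᵥ v ≠ 0) : (householder v).det = -1 := by
  have h : householder v = 1 + replicateCol Unit (-(2 / (v ⬝ᵥ v)) • v) * replicateRow Unit v := by
    rw [← vecMulVec_eq, smul_vecMulVec, householder, neg_smul, sub_eq_add_neg]
  rw [h, det_one_add_replicateCol_mul_replicateRow, dotProduct_smul, smul_eq_mul]
  field_simp; ring

lemma householder_mem_orthogonalGroup (hv : v ⬝ᵥ v ≠ 0) :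
    householder v ∈ orthogonalGroup ι K := by
  rw [mem_orthogonalGroup_iff, transpose_householder, householder_mul_self hv]

lemma vecMul_householder_of_dotProduct_eq_zero {x : ι → K} (hx : x ⬝ᵥ v = 0) :
    x ᵥ* householder v = x := by
  rw [vecMul_householder, hx, mul_zero, zero_smul, sub_zero]

lemma vecMul_householder_sub {x y : ι → K} (hxy : x ⬝ᵥ x = y ⬝ᵥ y)
    (hv : (x - y) ⬝ᵥ (x - y) ≠ 0) : x ᵥ* householder (x - y) = y := by
  have hnorm : (x - y) ⬝ᵥ (x - y) = 2 * (x ⬝ᵥ (x - y)) := by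
    simp only [sub_dotProduct, dotProduct_sub, dotProduct_comm y x, hxy]; ring
  have hcoef : 2 / ((x - y) ⬝ᵥ (x - y)) * (x ⬝ᵥ (x - y)) = 1 := by
    rw [hnorm] at hv ⊢
    have h2 : (2 : K) ≠ 0 := left_ne_zero_of_mul hv
    have ha : x ⬝ᵥ (x - y) ≠ 0 := right_ne_zero_of_mul hv
    field_simp
  rw [vecMul_householder, hcoef, one_smul, sub_sub_cancel]

end Householder

theorem exists_mem_specialOrthogonalGroup_vecMul_eq {ι K : Type*} [Fintype ι] [DecidableEq ι]
    [Nontrivial ι] [Field K] [LinearOrder K] [IsStrictOrderedRing K] {x y : ι → K}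
    (hxy : x ⬝ᵥ x = y ⬝ᵥ y) : ∃ Ω ∈ specialOrthogonalGroup ι K, x ᵥ* Ω = y := by
  obtain rfl | hne := eq_or_ne x y
  · exact ⟨1, one_mem _, vecMul_one x⟩
  obtain ⟨w, hw0, hwy⟩ := exists_ne_zero_dotProduct_eq_zero y
  have hv : (x - y) ⬝ᵥ (x - y) ≠ 0 := dotProduct_self_eq_zero.not.mpr (sub_ne_zero.mpr hne)
  have hw : w ⬝ᵥ w ≠ 0 := dotProduct_self_eq_zero.not.mpr hw0
  refine ⟨householder (x - y) * householder w, mem_specialOrthogonalGroup_iff.mpr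
    ⟨mul_mem (householder_mem_orthogonalGroup hv) (householder_mem_orthogonalGroup hw), ?_⟩, ?_⟩
  · rw [det_mul, det_householder hv, det_householder hw, neg_one_mul, neg_neg]
  · rw [← vecMul_vecMul, vecMul_householder_sub hxy hv,
      vecMul_householder_of_dotProduct_eq_zero (by rwa [dotProduct_comm])]

lemma charpoly_transpose_mul_mul_of_mem_orthogonalGroup {n R : Type*} [Fintype n] [DecidableEq n]
    [CommRing R] {Q : Matrix n n R} (hQ : Q ∈ orthogonalGroup n R) (A : Matrix n n R) :
    (Qᵀ * A * Q).charpoly = A.charpoly := by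
  rw [charpoly_mul_comm, ← Matrix.mul_assoc, (mem_orthogonalGroup_iff n R).mp hQ, Matrix.one_mul]

lemma mul_sum_smul_mul {ι n R : Type*} [Fintype ι] [Fintype n] [CommRing R]
    {A B : Matrix n n R} {Ω : Matrix ι ι R} {X : ι → Matrix n n R}
    (hX : ∀ m, A * X m * B = ∑ k, Ω m k • X k) (c : ι → R) :
    A * (∑ m, c m • X m) * B = ∑ k, (c ᵥ* Ω) k • X k := by
  simp only [Matrix.mul_sum, Matrix.sum_mul, Matrix.mul_smul, Matrix.smul_mul, hX,
    Finset.smul_sum, smul_smul, vecMul, dotProduct, Finset.sum_smul]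
  exact Finset.sum_comm

end Matrix

/-- Lemma 2.2 of the paper: if the `SO(M)` symmetry rotating the scalars is unbroken
(for every special orthogonal `Ω` there is an orthogonal `Q` compensating it), then all
normalized linear combinations `∑ m, φ m • R m` of the Yukawa matrices have the same
spectrum, i.e. the same characteristic polynomial. -/
theorem same_spectrum_of_SO_unbroken (n M : ℕ) (hM : 2 ≤ M)
    (R : Fin M → Matrix (Fin n) (Fin n) ℝ)
    (h : ∀ Ω ∈ Matrix.orthogonalGroup (Fin M) ℝ, Ω.det = 1 →
      ∃ Q ∈ Matrix.orthogonalGroup (Fin n) ℝ,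
        ∀ m : Fin M, Qᵀ * R m * Q = ∑ k : Fin M, (Ω m k) • R k)
    (φ φ' : Fin M → ℝ)
    (hφ : ∑ m : Fin M, (φ m) ^ 2 = 1) (hφ' : ∑ m : Fin M, (φ' m) ^ 2 = 1) :
    (∑ m : Fin M, (φ m) • R m).charpoly = (∑ m : Fin M, (φ' m) • R m).charpoly := by
  have : Nontrivial (Fin M) := Fin.nontrivial_iff_two_le.mpr hM
  have hnorm : φ ⬝ᵥ φ = φ' ⬝ᵥ φ' := by simp only [dotProduct, ← sq, hφ, hφ']
  obtain ⟨Ω, ⟨hΩ, hΩdet⟩, hΩφ⟩ := exists_mem_specialOrthogonalGroup_vecMul_eq hnorm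
  obtain ⟨Q, hQ, hQR⟩ := h Ω hΩ hΩdet
  rw [← charpoly_transpose_mul_mul_of_mem_orthogonalGroup hQ, mul_sum_smul_mul hQR, hΩφ]
end

section
/- Let R ∈ Matrix (Fin n) (Fin n) ℝ be symmetric (Rᵀ = R). Then there exists Q ∈ Matrix.orthogonalGroup (Fin n) ℝ with Qᵀ * R * Q = −R if and only if the characteristic polynomial of R equals the characteristic polynomial of −R. -/
/-!
Unitary conjugation preserves the characteristic polynomial, which gives one direction.
Conversely, the spectral theorem writes a Hermitian matrix as `W * diagonal λ * star W` with
`W` unitary and `λ` its sorted eigenvalues, which depend only on the characteristic polynomial;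
so two Hermitian matrices with the same characteristic polynomial are unitarily conjugate.
Apply this to `R` and `-R`, reading `star` as transpose over `ℝ`.
-/

open Matrix

namespace Matrix

variable {n : Type*} [Fintype n] [DecidableEq n]

theorem charpoly_star_mul_mul_of_mem_unitaryGroup {R : Type*} [CommRing R] [StarRing R]
    {U : Matrix n n R} (hU : U ∈ unitaryGroup n R) (A : Matrix n n R) :
    (star U * A * U).charpoly = A.charpoly := by
  rw [charpoly_mul_comm, ← mul_assoc, mem_unitaryGroup_iff.mp hU, one_mul]

theorem IsHermitian.exists_mem_unitaryGroup_star_mul_mul_eq_of_charpoly_eq {𝕜 : Type*}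
    [RCLike 𝕜] {A B : Matrix n n 𝕜} (hA : A.IsHermitian) (hB : B.IsHermitian)
    (h : A.charpoly = B.charpoly) :
    ∃ U ∈ unitaryGroup n 𝕜, star U * A * U = B := by
  set V : unitaryGroup n 𝕜 := hA.eigenvectorUnitary
  set W : unitaryGroup n 𝕜 := hB.eigenvectorUnitary
  have hdiag : star (V : Matrix n n 𝕜) * A * V = star (W : Matrix n n 𝕜) * B * W := by
    rw [← Unitary.conjStarAlgAut_star_apply (S := 𝕜),
      ← Unitary.conjStarAlgAut_star_apply (S := 𝕜), hA.conjStarAlgAut_star_eigenvectorUnitary,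
      hB.conjStarAlgAut_star_eigenvectorUnitary,
      (hA.eigenvalues_eq_eigenvalues_iff hB).mpr h]
  have hW : (W : Matrix n n 𝕜) * star (W : Matrix n n 𝕜) = 1 := mem_unitaryGroup_iff.mp W.2
  refine ⟨V * star W, (V * star W).2, ?_⟩
  calc star (V * star W : Matrix n n 𝕜) * A * (V * star W)
      = W * (star (V : Matrix n n 𝕜) * A * V) * star (W : Matrix n n 𝕜) := by
        simp only [Unitary.coe_star, star_mul, star_star, mul_assoc]
    _ = (W * star (W : Matrix n n 𝕜)) * B * (W * star (W : Matrix n n 𝕜)) := by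
        rw [hdiag]; simp only [mul_assoc]
    _ = B := by rw [hW, one_mul, mul_one]

end Matrix

/-- The `M = 1` case of Lemma 2.4 of the paper: for a real symmetric matrix `R`, there
is an orthogonal matrix `Q` with `Qᵀ * R * Q = -R` if and only if the spectrum of `R`
is symmetric about `0`, i.e. `R` and `-R` have the same characteristic polynomial. -/
theorem orthogonal_conj_neg_iff_charpoly_symm (n : ℕ)
    (R : Matrix (Fin n) (Fin n) ℝ) (hR : Rᵀ = R) :
    (∃ Q ∈ Matrix.orthogonalGroup (Fin n) ℝ, Qᵀ * R * Q = -R) ↔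
      R.charpoly = (-R).charpoly := by
  have star_eq_transpose (Q : Matrix (Fin n) (Fin n) ℝ) : star Q = Qᵀ := by
    rw [star_eq_conjTranspose, conjTranspose_eq_transpose_of_trivial]
  simp only [← star_eq_transpose]
  have hRh : R.IsHermitian := isHermitian_iff_isSymm.mpr hR
  constructor
  · rintro ⟨Q, hQ, hQR⟩
    rw [← hQR, charpoly_star_mul_mul_of_mem_unitaryGroup hQ]
  · exact hRh.exists_mem_unitaryGroup_star_mul_mul_eq_of_charpoly_eq hRh.neg
end

section
/- For every family R : Fin M → Matrix (Fin n) (Fin n) ℝ, the set 𝔤(R) = {(X, ω) ∈ Matrix (Fin n) (Fin n) ℝ × Matrix (Fin M) (Fin M) ℝ : Xᵀ = −X, ωᵀ = −ω, and (R m) * X − X * (R m) = ∑ k, (ω m k) • R k for all m : Fin M} is a Lie subalgebra of the product with componentwise commutator bracket: it contains (0, 0), is closed under addition and real scalar multiplication, and is closed under the bracket [(X₁, ω₁), (X₂, ω₂)] = (X₁X₂ − X₂X₁, ω₁ω₂ − ω₂ω₁). -/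
/-!
Skew matrices already form the Lie algebras `𝔰𝔬(n)` and `𝔰𝔬(M)`, and the remaining condition is
linear in `(X, ω)`, so only its closure under brackets needs an argument. By the Jacobi identity,
`⁅R m, ⁅X, Y⁆⁆ = ⁅⁅R m, X⁆, Y⁆ - ⁅⁅R m, Y⁆, X⁆`, and the derivation `⁅·, Y⁆` commutes with taking
scalar linear combinations of the `R k`; so the right side is mixing by `ω` after `η` minus mixing
by `η` after `ω`, that is, mixing by `ω * η - η * ω`.
-/

open Matrix

/-- The Lie algebra `𝔤(R)` (equation 2.20 of the paper) corresponding to the connected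
part of the symmetry group `G(R)` of a GNY-like model. -/
def gAlg (n M : ℕ) (R : Fin M → Matrix (Fin n) (Fin n) ℝ) :
    Set (Matrix (Fin n) (Fin n) ℝ × Matrix (Fin M) (Fin M) ℝ) :=
  {p | p.1ᵀ = -p.1 ∧ p.2ᵀ = -p.2 ∧
    ∀ m : Fin M, R m * p.1 - p.1 * R m = ∑ k : Fin M, (p.2 m k) • R k}

section Mixing

variable {ι K L : Type*} [Fintype ι] [CommRing K] [LieRing L] [LieAlgebra K L]

def mixFamily (ω : Matrix ι ι K) (R : ι → L) : ι → L :=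
  fun m => ∑ k, ω m k • R k

theorem mixFamily_mul (ω η : Matrix ι ι K) (R : ι → L) :
    mixFamily (ω * η) R = mixFamily ω (mixFamily η R) := by
  ext m
  simp only [mixFamily, mul_apply, Finset.sum_smul, Finset.smul_sum, smul_smul]
  exact Finset.sum_comm

theorem mixFamily_sub (ω η : Matrix ι ι K) (R : ι → L) :
    mixFamily (ω - η) R = mixFamily ω R - mixFamily η R := by
  ext m
  simp only [mixFamily, Matrix.sub_apply, sub_smul, Finset.sum_sub_distrib, Pi.sub_apply]

theorem lie_mixFamily (ω : Matrix ι ι K) (R : ι → L) (Y : L) (m : ι) :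
    ⁅mixFamily ω R m, Y⁆ = mixFamily ω (fun k => ⁅R k, Y⁆) m := by
  simp only [mixFamily, sum_lie, smul_lie]

/-- The derivative at `t = 0` of `Qᵀ (R m) Q = ∑ k, Ω m k • R k` along `Q = exp (t X)`,
`Ω = exp (t ω)`, once `Xᵀ = -X` is used. -/
def IsInfSymmetry (R : ι → L) (X : L) (ω : Matrix ι ι K) : Prop :=
  ∀ m, ⁅R m, X⁆ = mixFamily ω R m

variable {R : ι → L} {X Y : L} {ω η : Matrix ι ι K}

theorem IsInfSymmetry.zero : IsInfSymmetry R 0 (0 : Matrix ι ι K) := by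
  intro m
  simp [mixFamily]

theorem IsInfSymmetry.add (h₁ : IsInfSymmetry R X ω) (h₂ : IsInfSymmetry R Y η) :
    IsInfSymmetry R (X + Y) (ω + η) := by
  intro m
  simp only [lie_add, h₁ m, h₂ m, mixFamily, Matrix.add_apply, add_smul, Finset.sum_add_distrib]

theorem IsInfSymmetry.smul (c : K) (h : IsInfSymmetry R X ω) :
    IsInfSymmetry R (c • X) (c • ω) := by
  intro m
  simp only [lie_smul, h m, mixFamily, Matrix.smul_apply, smul_eq_mul, Finset.smul_sum, smul_smul]

theorem IsInfSymmetry.lie [DecidableEq ι] (h₁ : IsInfSymmetry R X ω) (h₂ : IsInfSymmetry R Y η) :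
    IsInfSymmetry R ⁅X, Y⁆ (ω * η - η * ω) := by
  intro m
  calc ⁅R m, ⁅X, Y⁆⁆ = ⁅⁅R m, X⁆, Y⁆ - ⁅⁅R m, Y⁆, X⁆ := by
        rw [leibniz_lie, sub_eq_add_neg, lie_skew]
    _ = mixFamily ω (fun k => ⁅R k, Y⁆) m - mixFamily η (fun k => ⁅R k, X⁆) m := by
        rw [h₁ m, h₂ m, lie_mixFamily, lie_mixFamily]
    _ = mixFamily (ω * η - η * ω) R m := by
        rw [funext h₁, funext h₂, mixFamily_sub, mixFamily_mul, mixFamily_mul, Pi.sub_apply]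

end Mixing

attribute [local instance] LieRing.ofAssociativeRing

section Associative

variable {ι K A : Type*} [Fintype ι] [DecidableEq ι] [CommRing K] [Ring A] [Algebra K A]

theorem Prod.fst_lie {B : Type*} [Ring B] (p q : A × B) : ⁅p, q⁆.1 = ⁅p.1, q.1⁆ := by
  simp only [Ring.lie_def, Prod.fst_sub, Prod.fst_mul]

theorem Prod.snd_lie {B : Type*} [Ring B] (p q : A × B) : ⁅p, q⁆.2 = ⁅p.2, q.2⁆ := by
  simp only [Ring.lie_def, Prod.snd_sub, Prod.snd_mul]

def infSymmetryLieSubalgebra (R : ι → A) : LieSubalgebra K (A × Matrix ι ι K) where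
  carrier := {p | IsInfSymmetry R p.1 p.2}
  zero_mem' := IsInfSymmetry.zero
  add_mem' := IsInfSymmetry.add
  smul_mem' c _ := IsInfSymmetry.smul c
  lie_mem' {p q} hp hq := by
    rw [Set.mem_ofPred_eq, Prod.fst_lie, Prod.snd_lie, Ring.lie_def p.2]
    exact hp.lie hq

theorem mem_infSymmetryLieSubalgebra {R : ι → A} {p : A × Matrix ι ι K} :
    p ∈ infSymmetryLieSubalgebra R ↔ IsInfSymmetry R p.1 p.2 :=
  Iff.rfl

end Associative

open LieAlgebra.Orthogonal in
def gAlgLieSubalgebra (n M : ℕ) (R : Fin M → Matrix (Fin n) (Fin n) ℝ) :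
    LieSubalgebra ℝ (Matrix (Fin n) (Fin n) ℝ × Matrix (Fin M) (Fin M) ℝ) :=
  (so (Fin n) ℝ).comap (AlgHom.fst ℝ _ _).toLieHom ⊓
    (so (Fin M) ℝ).comap (AlgHom.snd ℝ _ _).toLieHom ⊓ infSymmetryLieSubalgebra R

theorem coe_gAlgLieSubalgebra (n M : ℕ) (R : Fin M → Matrix (Fin n) (Fin n) ℝ) :
    (gAlgLieSubalgebra n M R : Set _) = gAlg n M R := by
  ext p
  simp [gAlgLieSubalgebra, gAlg, mem_infSymmetryLieSubalgebra, IsInfSymmetry, mixFamily,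
    Ring.lie_def, and_assoc]

/-- `𝔤(R)` is a Lie subalgebra of `𝔰𝔬(n) ⊕ 𝔰𝔬(M)` with the componentwise commutator
bracket: it contains `(0, 0)`, is closed under addition and real scalar multiplication,
and is closed under the bracket
`[(X₁, ω₁), (X₂, ω₂)] = (X₁X₂ - X₂X₁, ω₁ω₂ - ω₂ω₁)`. -/
theorem gAlg_is_lie_subalgebra (n M : ℕ) (R : Fin M → Matrix (Fin n) (Fin n) ℝ) :
    ((0, 0) : Matrix (Fin n) (Fin n) ℝ × Matrix (Fin M) (Fin M) ℝ) ∈ gAlg n M R ∧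
    (∀ p q, p ∈ gAlg n M R → q ∈ gAlg n M R → p + q ∈ gAlg n M R) ∧
    (∀ (c : ℝ) p, p ∈ gAlg n M R → c • p ∈ gAlg n M R) ∧
    (∀ p q, p ∈ gAlg n M R → q ∈ gAlg n M R →
      (p.1 * q.1 - q.1 * p.1, p.2 * q.2 - q.2 * p.2) ∈ gAlg n M R) := by
  simp only [← coe_gAlgLieSubalgebra, SetLike.mem_coe]
  refine ⟨zero_mem _, fun _ _ => add_mem, fun c _ => LieSubalgebra.smul_mem _ c,
    fun p q hp hq => ?_⟩
  have hpq := LieSubalgebra.lie_mem _ hp hq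
  rwa [Ring.lie_def] at hpq
end

section
/- Let N : ℕ with N ≥ 1 and let ε > 0 be real. Set g = Real.sqrt (16·π²·ε / (4·N + 6)). Then g > 0 and −(1/2)·g·ε + (6·g³ + 4·N·g³)/(32·π²) = 0, and there exists a unique λ > 0 such that −λ·ε + (8·N·g²·(λ − 24·g²) + 3·λ²)/(16·π²) = 0. -/
open Real

/-!
Since `g² = 16π²ε/(4N + 6)`, the Yukawa beta function `g(-ε/2 + (6 + 4N)g²/(32π²))` vanishes.
For this `g`, the quartic beta function is a quadratic in `λ` with positive leading coefficient
and negative constant term `-192Ng⁴/(16π²)`. Such a quadratic has exactly one positive root,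
because the product of its two roots is negative.
-/

theorem existsUnique_pos_root_of_const_neg {a b c : ℝ} (ha : 0 < a) (hc : c < 0) :
    ∃! x : ℝ, 0 < x ∧ a * x ^ 2 + b * x + c = 0 := by
  have hdisc : 0 ≤ b ^ 2 - 4 * a * c := by nlinarith [sq_nonneg b]
  obtain ⟨s, hs, hs2⟩ : ∃ s, s = √(b ^ 2 - 4 * a * c) ∧ s ^ 2 = b ^ 2 - 4 * a * c :=
    ⟨_, rfl, sq_sqrt hdisc⟩
  have hbs : b < s := by
    calc b ≤ |b| := le_abs_self b
      _ = √(b ^ 2) := (sqrt_sq_eq_abs b).symm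
      _ < s := hs ▸ sqrt_lt_sqrt (sq_nonneg b) (by nlinarith)
  obtain ⟨x, hx, hxroot⟩ : ∃ x, 0 < x ∧ a * x ^ 2 + b * x + c = 0 := by
    refine ⟨(-b + s) / (2 * a), div_pos (by linarith) (by positivity), ?_⟩
    have hvertex : 2 * a * ((-b + s) / (2 * a)) + b = s := by field_simp; ring
    have h : 4 * a * (a * ((-b + s) / (2 * a)) ^ 2 + b * ((-b + s) / (2 * a)) + c) = 0 := by
      linear_combination (2 * a * ((-b + s) / (2 * a)) + b + s) * hvertex + hs2
    exact (mul_eq_zero.mp h).resolve_left (by positivity)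
  refine ⟨x, ⟨hx, hxroot⟩, fun y ⟨hy, hyroot⟩ => ?_⟩
  by_contra hne
  -- Two distinct roots force `b = -a(x + y)`, and then `c = a x y > 0`.
  have hsum : a * (y + x) + b = 0 :=
    (mul_eq_zero.mp (by linear_combination hyroot - hxroot :
      (y - x) * (a * (y + x) + b) = 0)).resolve_left (sub_ne_zero.mpr hne)
  have hprod : c = a * x * y := by linear_combination hxroot - x * hsum
  have : 0 < a * x * y := by positivity
  linarith

theorem yukawa_beta_eq_zero {N ε g : ℝ} (hN : 4 * N + 6 ≠ 0)
    (hg : g ^ 2 = 16 * π ^ 2 * ε / (4 * N + 6)) :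
    -(1 / 2) * g * ε + (6 * g ^ 3 + 4 * N * g ^ 3) / (32 * π ^ 2) = 0 := by
  have hπ : π ≠ 0 := pi_ne_zero
  have hg3 : g ^ 3 = g * (16 * π ^ 2 * ε / (4 * N + 6)) := by rw [← hg]; ring
  rw [hg3]
  field_simp
  ring

theorem existsUnique_pos_quartic_beta_eq_zero {N ε g : ℝ} (hN : 0 < N) (hg : g ≠ 0) :
    ∃! l : ℝ, 0 < l ∧
      -l * ε + (8 * N * g ^ 2 * (l - 24 * g ^ 2) + 3 * l ^ 2) / (16 * π ^ 2) = 0 := by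
  have hquad : ∀ l : ℝ,
      -l * ε + (8 * N * g ^ 2 * (l - 24 * g ^ 2) + 3 * l ^ 2) / (16 * π ^ 2) =
        3 / (16 * π ^ 2) * l ^ 2 + (8 * N * g ^ 2 / (16 * π ^ 2) - ε) * l +
          -(192 * N * g ^ 4) / (16 * π ^ 2) := fun l => by ring
  simp_rw [hquad]
  have hπ : 0 < π := pi_pos
  exact existsUnique_pos_root_of_const_neg (by positivity)
    (div_neg_of_neg_of_pos (neg_neg_of_pos (by positivity)) (by positivity))

/-- The one-loop perturbative fixed point of the `M = 1` GNY-like model with all four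
Yukawa couplings equal (equations 3.1–3.2 of the paper): with
`g = √(16π²ε/(4N + 6))` one has `g > 0`, the one-loop Yukawa beta function
`-(1/2)gε + (6g³ + 4N g³)/(32π²)` vanishes, and there is a unique `λ > 0` at which the
one-loop quartic beta function `-λε + (8N g²(λ - 24g²) + 3λ²)/(16π²)` vanishes. -/
theorem gny_one_loop_fixed_point (N : ℕ) (hN : 1 ≤ N) (ε : ℝ) (hε : 0 < ε) :
    let g : ℝ := Real.sqrt (16 * π ^ 2 * ε / (4 * N + 6))
    0 < g ∧
    -(1 / 2) * g * ε + (6 * g ^ 3 + 4 * N * g ^ 3) / (32 * π ^ 2) = 0 ∧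
    (∃! l : ℝ, 0 < l ∧
      -l * ε + (8 * N * g ^ 2 * (l - 24 * g ^ 2) + 3 * l ^ 2) / (16 * π ^ 2) = 0) := by
  intro g
  have hD : (0 : ℝ) < 4 * N + 6 := by positivity
  have hg : 0 < g := sqrt_pos.mpr (by positivity)
  have hg2 : g ^ 2 = 16 * π ^ 2 * ε / (4 * N + 6) := sq_sqrt (by positivity)
  exact ⟨hg, yukawa_beta_eq_zero hD.ne' hg2,
    existsUnique_pos_quartic_beta_eq_zero (by exact_mod_cast hN) hg.ne'⟩
end

section
/- Let N : ℕ with N ≥ 1, let ε > 0 be real, and let g : Fin 4 → ℝ satisfy g i ≠ 0 for every i. If for every i : Fin 4 one has −(1/2)·(g i)·ε + (6·(g i)³ + N·(g i)·∑ j, (g j)²)/(32·π²) = 0, then (g i)² = 16·π²·ε / (4·N + 6) for every i : Fin 4; in particular (g i)² = (g j)² for all i, j. -/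
/-!
Since `g i ≠ 0`, the fixed-point equation `β_{g_i} = 0` can be divided by `g i`, leaving the
linear system `6 g_i² + N ∑_j g_j² = 16π²ε` in the squares. Summing it over `i` determines
`∑_j g_j²`, and then each equation determines `g_i²`.
-/

open Real

/-- The one-loop beta function `β_{g_i}` of the `M = 1` GNY-like model with Yukawa couplings `g`. -/
noncomputable def yukawaBeta {ι : Type*} [Fintype ι] (N ε : ℝ) (g : ι → ℝ) (i : ι) : ℝ :=
  -(1 / 2) * g i * ε + (6 * g i ^ 3 + N * g i * ∑ j, g j ^ 2) / (32 * π ^ 2)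

theorem yukawaBeta_eq_zero_iff {ι : Type*} [Fintype ι] {N ε : ℝ} {g : ι → ℝ} {i : ι}
    (hgi : g i ≠ 0) :
    yukawaBeta N ε g i = 0 ↔ 6 * g i ^ 2 + N * ∑ j, g j ^ 2 = 16 * π ^ 2 * ε := by
  have hπ : (32 * π ^ 2 : ℝ) ≠ 0 := by positivity
  have hβ : yukawaBeta N ε g i
      = g i / (32 * π ^ 2) * ((6 * g i ^ 2 + N * ∑ j, g j ^ 2) - 16 * π ^ 2 * ε) := by
    unfold yukawaBeta
    field_simp
    ring
  rw [hβ, mul_eq_zero, div_eq_zero_iff, sub_eq_zero]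
  simp [hgi, hπ]

theorem eq_div_of_forall_mul_add_mul_sum_eq {K ι : Type*} [Field K] [Fintype ι] {a b c : K}
    {x : ι → K} (ha : a ≠ 0) (hab : a + b * Fintype.card ι ≠ 0)
    (h : ∀ i, a * x i + b * ∑ j, x j = c) (i : ι) :
    x i = c / (a + b * Fintype.card ι) := by
  have hsum : (a + b * Fintype.card ι) * ∑ j, x j = Fintype.card ι * c := by
    have := Finset.sum_congr rfl fun j (_ : j ∈ Finset.univ) => h j
    simp only [Finset.sum_add_distrib, Finset.sum_const, Finset.card_univ, nsmul_eq_mul,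
      ← Finset.mul_sum] at this
    linear_combination this
  have hxi : a * ((a + b * Fintype.card ι) * x i) = a * c := by
    linear_combination (a + b * Fintype.card ι) * h i - b * hsum
  rw [eq_div_iff hab, mul_comm]
  exact mul_left_cancel₀ ha hxi

theorem gny_one_loop_yukawa_fixed_points_general (N : ℕ) (ε : ℝ)
    (g : Fin 4 → ℝ) (hg : ∀ i, g i ≠ 0)
    (hfix : ∀ i : Fin 4,
      -(1 / 2) * g i * ε + (6 * (g i) ^ 3 + N * g i * ∑ j : Fin 4, (g j) ^ 2) / (32 * π ^ 2)
        = 0) :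
    (∀ i : Fin 4, (g i) ^ 2 = 16 * π ^ 2 * ε / (4 * N + 6)) ∧
    (∀ i j : Fin 4, (g i) ^ 2 = (g j) ^ 2) := by
  have hlin : ∀ i, 6 * g i ^ 2 + N * ∑ j, g j ^ 2 = 16 * π ^ 2 * ε := fun i =>
    (yukawaBeta_eq_zero_iff (hg i)).1 (hfix i)
  have hden : (6 : ℝ) + N * Fintype.card (Fin 4) ≠ 0 := by positivity
  have hsq : ∀ i, g i ^ 2 = 16 * π ^ 2 * ε / (4 * N + 6) := fun i => by
    rw [eq_div_of_forall_mul_add_mul_sum_eq (x := fun j => g j ^ 2) (by norm_num) hden hlin i,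
      Fintype.card_fin]
    ring_nf
  exact ⟨hsq, fun i j => by rw [hsq i, hsq j]⟩

/-- At one loop, all fixed points of the general `M = 1` GNY-like model with four
independent nonzero Yukawa couplings (equation 3.1 of the paper) have
`g i² = 16π²ε/(4N + 6)` for every `i`; in particular all the `g i²` coincide. -/
theorem gny_one_loop_yukawa_fixed_points (N : ℕ) (hN : 1 ≤ N) (ε : ℝ) (hε : 0 < ε)
    (g : Fin 4 → ℝ) (hg : ∀ i, g i ≠ 0)
    (hfix : ∀ i : Fin 4,
      -(1 / 2) * g i * ε + (6 * (g i) ^ 3 + N * g i * ∑ j : Fin 4, (g j) ^ 2) / (32 * π ^ 2)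
        = 0) :
    (∀ i : Fin 4, (g i) ^ 2 = 16 * π ^ 2 * ε / (4 * N + 6)) ∧
    (∀ i j : Fin 4, (g i) ^ 2 = (g j) ^ 2) :=
  gny_one_loop_yukawa_fixed_points_general N ε g hg hfix
end

section
/- Let n : ℕ. Let L_i and L_j be the 4×4 real matrices of left multiplication by the quaternions i and j on ℍ with respect to the basis (1, i, j, k), and set J₁ = Matrix.kroneckerMap (· * ·) (1 : Matrix (Fin n) (Fin n) ℝ) L_i and J₂ = Matrix.kroneckerMap (· * ·) (1 : Matrix (Fin n) (Fin n) ℝ) L_j. Then the subgroup {Q ∈ Matrix.orthogonalGroup (Fin n × Fin 4) ℝ : Q * J₁ = J₁ * Q and Q * J₂ = J₂ * Q} is isomorphic, as a group, to the unitary group unitary (Matrix (Fin n) (Fin n) ℍ) of the star ring of n×n quaternionic matrices (the compact symplectic group Sp(n)). -/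
/-!
Identify `ℝ⁴` with `ℍ` through the orthonormal basis `(1, i, j, k)`, so that `ℝ^{4n}` becomes `ℍⁿ`
and `J₁`, `J₂` become left multiplication by `i` and `j`. Since `i` and `j` generate `ℍ` as an
`ℝ`-algebra, a real `4 × 4` block commuting with `L_i` and `L_j` commutes with every left
multiplication, hence is a right multiplication `x ↦ x * star c`. So the matrices commuting with
`J₁`, `J₂` are exactly the images of the injective star-algebra map `Mₙ(ℍ) → M_{4n}(ℝ)` replacing
each entry `c` by that block; orthonormality of the basis makes it send `star` to the transpose,
so its orthogonal elements are precisely the images of the unitary quaternionic matrices.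
-/

open Matrix Quaternion

open scoped Quaternion

/-- The subgroup of the orthogonal group commuting with every matrix in `S`. -/
def commutantSubgroup (ι : Type*) [Fintype ι] [DecidableEq ι]
    (S : Set (Matrix ι ι ℝ)) : Subgroup (Matrix.orthogonalGroup ι ℝ) where
  carrier := {Q | ∀ D ∈ S, (Q : Matrix ι ι ℝ) * D = D * (Q : Matrix ι ι ℝ)}
  one_mem' := by intro D _; simp
  mul_mem' := by
    intro a b ha hb D hD
    simp only [Submonoid.coe_mul]
    rw [mul_assoc, hb D hD, ← mul_assoc, ha D hD, mul_assoc]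
  inv_mem' := by
    intro a ha D hD
    have h1 : star (a : Matrix ι ι ℝ) * a = 1 := Unitary.star_mul_self_of_mem a.2
    have h2 : (a : Matrix ι ι ℝ) * star (a : Matrix ι ι ℝ) = 1 := Unitary.mul_star_self_of_mem a.2
    have hcoe : ((a⁻¹ : Matrix.orthogonalGroup ι ℝ) : Matrix ι ι ℝ)
        = star (a : Matrix ι ι ℝ) := rfl
    show ((a⁻¹ : Matrix.orthogonalGroup ι ℝ) : Matrix ι ι ℝ) * D
        = D * ((a⁻¹ : Matrix.orthogonalGroup ι ℝ) : Matrix ι ι ℝ)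
    rw [hcoe]
    calc star (a : Matrix ι ι ℝ) * D
        = star (a : Matrix ι ι ℝ) * D * ((a : Matrix ι ι ℝ) * star (a : Matrix ι ι ℝ)) := by
          rw [h2, mul_one]
      _ = star (a : Matrix ι ι ℝ) * (D * (a : Matrix ι ι ℝ)) * star (a : Matrix ι ι ℝ) := by
          noncomm_ring
      _ = star (a : Matrix ι ι ℝ) * ((a : Matrix ι ι ℝ) * D) * star (a : Matrix ι ι ℝ) := by
          rw [ha D hD]
      _ = (star (a : Matrix ι ι ℝ) * (a : Matrix ι ι ℝ)) * (D * star (a : Matrix ι ι ℝ)) := by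
          noncomm_ring
      _ = D * star (a : Matrix ι ι ℝ) := by rw [h1, one_mul]

/-- The `4 × 4` real matrix of left multiplication by the quaternion `i` on `ℍ`,
with respect to the basis `(1, i, j, k)`. -/
noncomputable def Li : Matrix (Fin 4) (Fin 4) ℝ :=
  LinearMap.toMatrix (QuaternionAlgebra.basisOneIJK (-1 : ℝ) (0 : ℝ) (-1 : ℝ))
    (QuaternionAlgebra.basisOneIJK (-1 : ℝ) (0 : ℝ) (-1 : ℝ))
    (LinearMap.mulLeft ℝ (⟨0, 1, 0, 0⟩ : ℍ[ℝ]))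

/-- The `4 × 4` real matrix of left multiplication by the quaternion `j` on `ℍ`,
with respect to the basis `(1, i, j, k)`. -/
noncomputable def Lj : Matrix (Fin 4) (Fin 4) ℝ :=
  LinearMap.toMatrix (QuaternionAlgebra.basisOneIJK (-1 : ℝ) (0 : ℝ) (-1 : ℝ))
    (QuaternionAlgebra.basisOneIJK (-1 : ℝ) (0 : ℝ) (-1 : ℝ))
    (LinearMap.mulLeft ℝ (⟨0, 0, 1, 0⟩ : ℍ[ℝ]))

open scoped Kronecker

section BlockMatrix

variable {R A : Type*} [CommSemiring R] [Star R] [Semiring A] [Star A] [Algebra R A]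
  {m : Type*} [Fintype m] [DecidableEq m] (n : Type*) [Fintype n] [DecidableEq n]

def StarAlgHom.blockMatrix (φ : A →⋆ₐ[R] Matrix m m R) :
    Matrix n n A →⋆ₐ[R] Matrix (n × m) (n × m) R where
  toAlgHom := (compAlgEquiv n m R R).toAlgHom.comp φ.toAlgHom.mapMatrix
  map_star' M := by
    ext ⟨p, a⟩ ⟨q, b⟩
    simp [map_star]

variable {n}

@[simp]
theorem StarAlgHom.blockMatrix_apply (φ : A →⋆ₐ[R] Matrix m m R) (M : Matrix n n A)
    (p q : n) (a b : m) : φ.blockMatrix n M (p, a) (q, b) = φ (M p q) a b :=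
  rfl

theorem StarAlgHom.blockMatrix_injective {φ : A →⋆ₐ[R] Matrix m m R}
    (hφ : Function.Injective φ) : Function.Injective (φ.blockMatrix n) := fun _ _ h =>
  Matrix.ext fun p q => hφ <| Matrix.ext fun a b => congr_fun (congr_fun h (p, a)) (q, b)

theorem StarAlgHom.mem_range_blockMatrix_iff (φ : A →⋆ₐ[R] Matrix m m R)
    (Q : Matrix (n × m) (n × m) R) :
    Q ∈ Set.range (φ.blockMatrix n) ↔ ∀ p q, (Matrix.comp n n m m R).symm Q p q ∈ Set.range φ := by
  constructor
  · rintro ⟨M, rfl⟩ p q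
    exact ⟨M p q, rfl⟩
  · intro h
    choose M hM using h
    refine ⟨Matrix.of M, ?_⟩
    ext ⟨p, a⟩ ⟨q, b⟩
    simp [hM]

end BlockMatrix

section Kronecker

variable {R : Type*} [Semiring R] {m n : Type*} [DecidableEq n]

theorem Matrix.one_kronecker_eq_comp_diagonal (L : Matrix m m R) :
    (1 : Matrix n n R) ⊗ₖ L = comp n n m m R (diagonal fun _ => L) := by
  ext ⟨p, a⟩ ⟨q, b⟩
  by_cases h : p = q <;> simp [h]

theorem Matrix.commute_one_kronecker_iff [Fintype m] [Fintype n]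
    (Q : Matrix (n × m) (n × m) R) (L : Matrix m m R) :
    Commute Q ((1 : Matrix n n R) ⊗ₖ L) ↔ ∀ p q, Commute ((comp n n m m R).symm Q p q) L := by
  obtain ⟨N, rfl⟩ := (compRingEquiv n m R).surjective Q
  rw [one_kronecker_eq_comp_diagonal, ← compRingEquiv_apply,
    commute_map_iff (compRingEquiv n m R).injective, commute_iff_eq, ← Matrix.ext_iff]
  simp only [mul_diagonal, diagonal_mul, compRingEquiv_apply, Equiv.symm_apply_apply]
  rfl

end Kronecker

namespace Unitary

variable {R S : Type*} [Monoid R] [StarMul R] [Monoid S] [StarMul S] {f : R →⋆* S}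

theorem mem_of_map_mem (hf : Function.Injective f) {x : R} (hx : f x ∈ unitary S) :
    x ∈ unitary R := by
  rw [Unitary.mem_iff, ← map_star] at hx
  exact ⟨hf (by rw [map_mul, map_one, hx.1]), hf (by rw [map_mul, map_one, hx.2])⟩

theorem mem_range_map_iff (hf : Function.Injective f) (u : unitary S) :
    u ∈ (Unitary.map f).toMonoidHom.range ↔ (u : S) ∈ Set.range f := by
  constructor
  · rintro ⟨v, rfl⟩
    exact ⟨v, rfl⟩
  · rintro ⟨x, hx⟩
    exact ⟨⟨x, mem_of_map_mem hf (hx ▸ u.2)⟩, Subtype.ext hx⟩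

end Unitary

noncomputable section

namespace Quaternion

@[simps]
def unitI : ℍ[ℝ] := ⟨0, 1, 0, 0⟩

@[simps]
def unitJ : ℍ[ℝ] := ⟨0, 0, 1, 0⟩

theorem adjoin_unitI_unitJ : Algebra.adjoin ℝ {unitI, unitJ} = ⊤ := by
  set S := Algebra.adjoin ℝ {unitI, unitJ}
  have hI : unitI ∈ S := Algebra.subset_adjoin (by simp)
  have hJ : unitJ ∈ S := Algebra.subset_adjoin (by simp)
  refine eq_top_iff.mpr fun q _ => ?_
  have hq : q = algebraMap ℝ ℍ[ℝ] q.re + q.imI • unitI + q.imJ • unitJ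
      + q.imK • (unitI * unitJ) := by
    ext <;> simp
  rw [hq]
  exact add_mem (add_mem (add_mem (S.algebraMap_mem _) (S.smul_mem hI _)) (S.smul_mem hJ _))
    (S.smul_mem (mul_mem hI hJ) _)

theorem eq_mulRight_of_commute_mulLeft (f : Module.End ℝ ℍ[ℝ])
    (hI : Commute f (LinearMap.mulLeft ℝ unitI)) (hJ : Commute f (LinearMap.mulLeft ℝ unitJ)) :
    f = LinearMap.mulRight ℝ (f 1) := by
  have hle : Algebra.adjoin ℝ {unitI, unitJ} ≤
      (Subalgebra.centralizer ℝ {f}).comap (Algebra.lmul ℝ ℍ[ℝ]) := by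
    rw [Algebra.adjoin_le_iff]
    rintro q (rfl | rfl)
    · exact fun g hg => (Set.mem_singleton_iff.mp hg) ▸ hI.eq
    · exact fun g hg => (Set.mem_singleton_iff.mp hg) ▸ hJ.eq
  rw [adjoin_unitI_unitJ] at hle
  ext1 x
  have hx : f * LinearMap.mulLeft ℝ x = LinearMap.mulLeft ℝ x * f := hle Algebra.mem_top f rfl
  simpa using LinearMap.congr_fun hx 1

def orthonormalBasisOneIJK : OrthonormalBasis (Fin 4) ℝ ℍ[ℝ] :=
  .ofRepr linearIsometryEquivTuple

theorem orthonormalBasisOneIJK_toBasis :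
    orthonormalBasisOneIJK.toBasis = QuaternionAlgebra.basisOneIJK (-1 : ℝ) 0 (-1) :=
  Module.Basis.eq_ofRepr_eq_repr fun q a => by fin_cases a <;> rfl

theorem adjoint_mulRight (c : ℍ[ℝ]) :
    LinearMap.adjoint (LinearMap.mulRight ℝ c) = LinearMap.mulRight ℝ (star c) := by
  refine ((LinearMap.eq_adjoint_iff _ _).mpr fun x y => ?_).symm
  simp only [LinearMap.mulRight_apply, inner_def, star_mul, mul_assoc]

/-- `star` turns the anti-homomorphism `c ↦ (· * c)` into a homomorphism. -/
def mulRightStar : ℍ[ℝ] →⋆ₐ[ℝ] Module.End ℝ ℍ[ℝ] where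
  toFun c := LinearMap.mulRight ℝ (star c)
  map_one' := by rw [star_one, LinearMap.mulRight_one, Module.End.one_eq_id]
  map_mul' c d := by rw [star_mul, LinearMap.mulRight_mul, Module.End.mul_eq_comp]
  map_zero' := by rw [star_zero]; exact LinearMap.ext fun _ => mul_zero _
  map_add' c d := by rw [star_add]; exact LinearMap.ext fun _ => mul_add _ _ _
  commutes' r := by
    refine LinearMap.ext fun x => ?_
    change x * star (r : ℍ[ℝ]) = r • x
    rw [star_coe, mul_coe_eq_smul]
  map_star' c := by simp [LinearMap.star_eq_adjoint, adjoint_mulRight]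

theorem mulRightStar_apply (c : ℍ[ℝ]) : mulRightStar c = LinearMap.mulRight ℝ (star c) :=
  rfl

def mulRightStarMatrix : ℍ[ℝ] →⋆ₐ[ℝ] Matrix (Fin 4) (Fin 4) ℝ :=
  (LinearMap.toMatrixOrthonormal orthonormalBasisOneIJK).toStarAlgHom.comp mulRightStar

theorem mulRightStarMatrix_injective : Function.Injective mulRightStarMatrix := by
  intro c d h
  have h1 := LinearMap.congr_fun ((LinearMap.toMatrixOrthonormal _).injective h) 1
  simpa [mulRightStar_apply] using h1

theorem toMatrixOrthonormal_mulLeft_unitI :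
    LinearMap.toMatrixOrthonormal orthonormalBasisOneIJK (LinearMap.mulLeft ℝ unitI) = Li := by
  simp only [LinearMap.toMatrixOrthonormal_apply, orthonormalBasisOneIJK_toBasis]
  rfl

theorem toMatrixOrthonormal_mulLeft_unitJ :
    LinearMap.toMatrixOrthonormal orthonormalBasisOneIJK (LinearMap.mulLeft ℝ unitJ) = Lj := by
  simp only [LinearMap.toMatrixOrthonormal_apply, orthonormalBasisOneIJK_toBasis]
  rfl

theorem mem_range_mulRightStarMatrix_iff (M : Matrix (Fin 4) (Fin 4) ℝ) :
    M ∈ Set.range mulRightStarMatrix ↔ Commute M Li ∧ Commute M Lj := by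
  have hE := EquivLike.injective (LinearMap.toMatrixOrthonormal orthonormalBasisOneIJK)
  obtain ⟨f, rfl⟩ := EquivLike.surjective (LinearMap.toMatrixOrthonormal orthonormalBasisOneIJK) M
  rw [← toMatrixOrthonormal_mulLeft_unitI, ← toMatrixOrthonormal_mulLeft_unitJ,
    commute_map_iff hE, commute_map_iff hE]
  constructor
  · rintro ⟨c, hc⟩
    rw [← hE hc]
    exact ⟨(LinearMap.commute_mulLeft_right _ _).symm, (LinearMap.commute_mulLeft_right _ _).symm⟩
  · rintro ⟨hI, hJ⟩
    refine ⟨star (f 1), congrArg (LinearMap.toMatrixOrthonormal orthonormalBasisOneIJK) ?_⟩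
    change LinearMap.mulRight ℝ (star (star (f 1))) = f
    rw [star_star]
    exact (eq_mulRight_of_commute_mulLeft f hI hJ).symm

variable (n : Type*) [Fintype n] [DecidableEq n]

def unitaryRealRep : unitary (Matrix n n ℍ[ℝ]) →* Matrix.orthogonalGroup (n × Fin 4) ℝ :=
  (Unitary.map (StarMonoidHom.ofClass (mulRightStarMatrix.blockMatrix n))).toMonoidHom

theorem unitaryRealRep_injective : Function.Injective (unitaryRealRep n) :=
  Unitary.map_injective (StarAlgHom.blockMatrix_injective mulRightStarMatrix_injective)

theorem range_unitaryRealRep :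
    (unitaryRealRep n).range =
      commutantSubgroup (n × Fin 4) {(1 : Matrix n n ℝ) ⊗ₖ Li, (1 : Matrix n n ℝ) ⊗ₖ Lj} := by
  ext Q
  have hmem : Q ∈ commutantSubgroup (n × Fin 4) {(1 : Matrix n n ℝ) ⊗ₖ Li, (1 : Matrix n n ℝ) ⊗ₖ Lj}
      ↔ Commute (Q : Matrix (n × Fin 4) (n × Fin 4) ℝ) ((1 : Matrix n n ℝ) ⊗ₖ Li) ∧
        Commute (Q : Matrix (n × Fin 4) (n × Fin 4) ℝ) ((1 : Matrix n n ℝ) ⊗ₖ Lj) := by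
    simp [commutantSubgroup, commute_iff_eq]
  rw [hmem, commute_one_kronecker_iff, commute_one_kronecker_iff, unitaryRealRep,
    Unitary.mem_range_map_iff (StarAlgHom.blockMatrix_injective mulRightStarMatrix_injective)]
  refine (mulRightStarMatrix.mem_range_blockMatrix_iff _).trans ?_
  simp only [mem_range_mulRightStarMatrix_iff, forall_and]

end Quaternion

end

/-- The commutant subgroup of Theorem 2.8 of the paper for a quaternionic-type module
of multiplicity `n`: the real orthogonal matrices commuting with the quaternionic
structure `J₁ = 1ₙ ⊗ L_i`, `J₂ = 1ₙ ⊗ L_j` on `ℝ^{4n}` form a group isomorphic to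
the quaternionic unitary group `Sp(n) = unitary (Matrix (Fin n) (Fin n) ℍ)`. -/
theorem commutant_quaternionic_structure (n : ℕ) :
    Nonempty
      ((commutantSubgroup (Fin n × Fin 4)
          {Matrix.kroneckerMap (· * ·) (1 : Matrix (Fin n) (Fin n) ℝ) Li,
           Matrix.kroneckerMap (· * ·) (1 : Matrix (Fin n) (Fin n) ℝ) Lj}) ≃*
        unitary (Matrix (Fin n) (Fin n) ℍ[ℝ])) :=
  ⟨((MonoidHom.ofInjective (unitaryRealRep_injective (Fin n))).trans
    (MulEquiv.subgroupCongr (range_unitaryRealRep (Fin n)))).symm⟩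
end

section
/- Let m : ℤ with m ≠ 0. If W is an ℝ-linear subspace of (Fin 2 → ℝ) such that (Rot (m·θ)).mulVec v ∈ W for every v ∈ W and every θ : ℝ, then W = ⊥ or W = ⊤. -/
/-!
Since `m ≠ 0`, every rotation `Rot α = Rot (m * (α / m))` preserves `W`, in particular the
quarter turn. The quarter turn has no real eigenvalue, so a nonzero `v ∈ W` and its quarter
turn are linearly independent and span the plane.
-/

open Matrix Real

noncomputable def Rot (α : ℝ) : Matrix (Fin 2) (Fin 2) ℝ :=
  !![Real.cos α, -Real.sin α; Real.sin α, Real.cos α]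

lemma rot_pi_div_two_mulVec (v : Fin 2 → ℝ) : Rot (π / 2) *ᵥ v = ![-v 1, v 0] := by
  ext i
  fin_cases i <;> simp [Rot, mulVec, dotProduct, Fin.sum_univ_two]

lemma linearIndependent_pair_rot_pi_div_two_mulVec {v : Fin 2 → ℝ} (hv : v ≠ 0) :
    LinearIndependent ℝ ![v, Rot (π / 2) *ᵥ v] := by
  rw [LinearIndependent.pair_iff' hv, rot_pi_div_two_mulVec]
  intro a ha
  have h0 : a * v 0 = -v 1 := by simpa using congr_fun ha 0
  have h1 : a * v 1 = v 0 := by simpa using congr_fun ha 1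
  have hsq : v 0 ^ 2 + v 1 ^ 2 = 0 := by linear_combination v 1 * h0 - v 0 * h1
  have hv0 : v 0 = 0 := by nlinarith [sq_nonneg (v 0), sq_nonneg (v 1)]
  have hv1 : v 1 = 0 := by nlinarith [sq_nonneg (v 0), sq_nonneg (v 1)]
  exact hv (funext fun i => by fin_cases i <;> simp [hv0, hv1])

lemma Submodule.eq_top_of_linearIndependent_pair {K V : Type*} [Field K] [AddCommGroup V]
    [Module K V] (hV : Module.finrank K V = 2) {W : Submodule K V} {x y : V}
    (hxy : LinearIndependent K ![x, y]) (hx : x ∈ W) (hy : y ∈ W) : W = ⊤ := by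
  have hspan := hxy.span_eq_top_of_card_eq_finrank (by simp [hV])
  rw [eq_top_iff, ← hspan, Submodule.span_le, Matrix.range_cons_cons_empty]
  exact Set.insert_subset hx (Set.singleton_subset_iff.mpr hy)

lemma rot_mulVec_mem_of_forall_int_mul {m : ℤ} (hm : m ≠ 0) {W : Submodule ℝ (Fin 2 → ℝ)}
    (hW : ∀ v ∈ W, ∀ θ : ℝ, Rot (m * θ) *ᵥ v ∈ W) {v : Fin 2 → ℝ} (hv : v ∈ W) (α : ℝ) :
    Rot α *ᵥ v ∈ W := by
  simpa [mul_div_cancel₀ α (Int.cast_ne_zero.mpr hm)] using hW v hv (α / m)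

/-- The appendix claim of the paper that for every nonzero frequency `m` the
two-dimensional real representation `2_m` of `Spin(2)`, `θ ↦ Rot (mθ)`, is irreducible
over `ℝ`: any invariant subspace is trivial. -/
theorem rot_rep_irreducible (m : ℤ) (hm : m ≠ 0)
    (W : Submodule ℝ (Fin 2 → ℝ))
    (hW : ∀ v ∈ W, ∀ θ : ℝ, (Rot ((m : ℝ) * θ)).mulVec v ∈ W) :
    W = ⊥ ∨ W = ⊤ := by
  refine or_iff_not_imp_left.mpr fun hW0 => ?_
  obtain ⟨v, hvW, hv0⟩ := W.exists_mem_ne_zero_of_ne_bot hW0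
  exact W.eq_top_of_linearIndependent_pair (Module.finrank_fin_fun ℝ)
    (linearIndependent_pair_rot_pi_div_two_mulVec hv0) hvW
    (rot_mulVec_mem_of_forall_int_mul hm hW hvW _)
end

section
/- Let m n : ℤ. If there exists an invertible matrix P ∈ Matrix (Fin 2) (Fin 2) ℝ such that P * Rot (m·θ) = Rot (n·θ) * P for every θ : ℝ, then m = n or m = −n. -/
/-! Conjugate representations have equal characters, and the character `θ ↦ 2 cos (m θ)` of the
frequency-`m` rotation family determines `m²`: its second derivative at `0` is `-2 m²`. -/

open Matrix Real

theorem Matrix.trace_eq_of_isUnit_of_mul_eq_mul {m α : Type*} [Fintype m] [DecidableEq m]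
    [CommRing α] {P A B : Matrix m m α} (hP : IsUnit P) (h : P * A = B * P) :
    trace A = trace B := by
  have hB : B = P * A * P⁻¹ := by
    rw [h, Matrix.mul_assoc, mul_nonsing_inv P ((isUnit_iff_isUnit_det P).mp hP), Matrix.mul_one]
  rw [hB, trace_conj hP]

theorem trace_Rot (α : ℝ) : trace (Rot α) = 2 * cos α := by
  rw [Rot, trace_fin_two_of]
  ring

theorem iteratedDeriv_two_cos_mul_zero (c : ℝ) :
    iteratedDeriv 2 (fun θ => cos (c * θ)) 0 = -c ^ 2 := by
  rw [iteratedDeriv_comp_const_mul contDiff_cos, iteratedDeriv_even_cos 1]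
  simp

theorem sq_eq_sq_of_forall_cos_mul_eq {a b : ℝ} (h : ∀ θ, cos (a * θ) = cos (b * θ)) :
    a ^ 2 = b ^ 2 := by
  have := iteratedDeriv_two_cos_mul_zero a
  rw [funext h, iteratedDeriv_two_cos_mul_zero b] at this
  linarith

/-- The appendix claim of the paper that the two-dimensional real representations `2_m`
of `Spin(2)` with distinct positive frequencies are pairwise inequivalent: an invertible
intertwiner between the rotation families of frequencies `m` and `n` can exist only
when `m = ±n`. -/
theorem rot_rep_intertwiner (m n : ℤ)
    (h : ∃ P : Matrix (Fin 2) (Fin 2) ℝ, IsUnit P ∧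
      ∀ θ : ℝ, P * Rot ((m : ℝ) * θ) = Rot ((n : ℝ) * θ) * P) :
    m = n ∨ m = -n := by
  obtain ⟨P, hP, hPRot⟩ := h
  have hcos : ∀ θ : ℝ, cos ((m : ℝ) * θ) = cos ((n : ℝ) * θ) := fun θ => by
    have := trace_eq_of_isUnit_of_mul_eq_mul hP (hPRot θ)
    rw [trace_Rot, trace_Rot] at this
    linarith
  have hsq : m ^ 2 = n ^ 2 := by exact_mod_cast sq_eq_sq_of_forall_cos_mul_eq hcos
  exact sq_eq_sq_iff_eq_or_eq_neg.mp hsq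
end
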